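/- arXiv:2103.02981 — 2 statements merged into one kernel-verified Lean document; each statement's English description precedes it below -/
import Mathlib

section
/- Let K : ℝ → [0,∞) be Lebesgue integrable with ∫_ℝ K = 1, where K is not assumed to vanish outside [0,1]. Let K₂ᵒᵖᵗ(x) = 6x(1−x)·1_{[0,1]}(x), and set ε = K − K₂ᵒᵖᵗ. If ∫_ℝ ε(x)dx = 0 and ∫_ℝ ε(x)(x² − x)dx = 0, then ∫₀¹ K₂ᵒᵖᵗ(x)·ε(x)dx = 6·∫_{ℝ∖[0,1]} x(x−1)·ε(x)dx ≥ 0. -/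
open MeasureTheory

theorem stmt_2 (K : ℝ → ℝ) (hK0 : ∀ x, 0 ≤ K x) (hKint : Integrable K)
    (hK1 : (∫ x : ℝ, K x) = 1) :
    let Kopt : ℝ → ℝ := fun x => if x ∈ Set.Icc (0:ℝ) 1 then 6 * x * (1 - x) else 0
    let ε : ℝ → ℝ := fun x => K x - Kopt x
    (∫ x : ℝ, ε x) = 0 →
    Integrable (fun x => ε x * (x^2 - x)) →
    (∫ x : ℝ, ε x * (x^2 - x)) = 0 →
    ((∫ x in (0:ℝ)..1, Kopt x * ε x) = 6 * ∫ x in (Set.Icc (0:ℝ) 1)ᶜ, x * (x - 1) * ε x ∧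
      0 ≤ ∫ x in (0:ℝ)..1, Kopt x * ε x) := by
  intro Kopt ε hε0 hint hε2
  set f : ℝ → ℝ := fun x => ε x * (x^2 - x) with hf
  have hsplit : (∫ x in Set.Icc (0:ℝ) 1, f x) + (∫ x in (Set.Icc (0:ℝ) 1)ᶜ, f x)
      = ∫ x, f x := integral_add_compl measurableSet_Icc hint
  have hIcc : (∫ x in Set.Icc (0:ℝ) 1, f x) = - ∫ x in (Set.Icc (0:ℝ) 1)ᶜ, f x := by
    rw [hε2] at hsplit; linarith
  -- interval integral as set integral over Icc
  have h1 : (∫ x in (0:ℝ)..1, Kopt x * ε x)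
      = ∫ x in Set.Icc (0:ℝ) 1, Kopt x * ε x := by
    rw [intervalIntegral.integral_of_le (by norm_num : (0:ℝ) ≤ 1),
      ← integral_Icc_eq_integral_Ioc]
  have h2 : (∫ x in Set.Icc (0:ℝ) 1, Kopt x * ε x)
      = ∫ x in Set.Icc (0:ℝ) 1, (-6) * f x := by
    apply setIntegral_congr_fun measurableSet_Icc
    intro x hx
    simp only [Kopt, ε, f, if_pos hx]
    ring
  have h3 : (∫ x in Set.Icc (0:ℝ) 1, (-6) * f x)
      = (-6) * ∫ x in Set.Icc (0:ℝ) 1, f x := by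
    rw [integral_const_mul]
  have h4 : (∫ x in (Set.Icc (0:ℝ) 1)ᶜ, f x)
      = ∫ x in (Set.Icc (0:ℝ) 1)ᶜ, x * (x - 1) * ε x := by
    apply setIntegral_congr_fun measurableSet_Icc.compl
    intro x _
    simp only [f]
    ring
  have heq : (∫ x in (0:ℝ)..1, Kopt x * ε x)
      = 6 * ∫ x in (Set.Icc (0:ℝ) 1)ᶜ, x * (x - 1) * ε x := by
    rw [h1, h2, h3, hIcc, ← h4]; ring
  refine ⟨heq, ?_⟩
  rw [heq]
  have hnn : 0 ≤ ∫ x in (Set.Icc (0:ℝ) 1)ᶜ, x * (x - 1) * ε x := by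
    apply setIntegral_nonneg measurableSet_Icc.compl
    intro x hx
    have hx' : x < 0 ∨ 1 < x := by
      simp only [Set.mem_compl_iff, Set.mem_Icc, not_and_or, not_le] at hx
      tauto
    have hxx : 0 ≤ x * (x - 1) := by
      rcases hx' with h | h
      · nlinarith
      · nlinarith
    have hε : 0 ≤ ε x := by
      have : Kopt x = 0 := if_neg hx
      simp only [ε, this, sub_zero]
      exact hK0 x
    positivity
  linarith
end

section
/- Let K : ℝ → [0,∞) be measurable with ∫_ℝ K(x)dx = 1, K(x) = K(1−x) for all x, and ∫_ℝ (x−1/2)² K(x)dx = 1/20. Let K₂ᵒᵖᵗ(x) = 6x(1−x)·1_{[0,1]}(x). Then ∫_ℝ K(x)² dx ≥ ∫₀¹ (K₂ᵒᵖᵗ(x))² dx = 6/5, with equality (in the a.e. sense) if and only if K = K₂ᵒᵖᵗ almost everywhere. -/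
/-!
On `[0, 1]` the kernel `6x(1 - x)` coincides with the parabola `3/2 - 6(x - 1/2)²`, which
is negative off `[0, 1]`; hence for every nonnegative `K` with unit mass and second moment
`1/20`, `∫ K · Kopt ≥ ∫ K · (3/2 - 6(x - 1/2)²) = 3/2 - 6/20 = 6/5 = ∫ Kopt²`.
Expanding the square then gives `∫ K² ≥ ∫ Kopt² + ∫ (K - Kopt)²`, which yields both the
bound and its equality case.
-/

open MeasureTheory ENNReal

section Projection

variable {α : Type*} [MeasurableSpace α] {μ : Measure α} {f g : α → ℝ}

theorem ofReal_integral_sq_add_lintegral_sq_sub_le (hf : AEStronglyMeasurable f μ)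
    (hg : MemLp g 2 μ) (hfg : Integrable (fun x => f x * g x) μ)
    (hle : ∫ x, g x ^ 2 ∂μ ≤ ∫ x, f x * g x ∂μ) :
    ENNReal.ofReal (∫ x, g x ^ 2 ∂μ) + ∫⁻ x, ENNReal.ofReal ((f x - g x) ^ 2) ∂μ ≤
      ∫⁻ x, ENNReal.ofReal (f x ^ 2) ∂μ := by
  have hg2 : Integrable (fun x => g x ^ 2) μ := (memLp_two_iff_integrable_sq hg.1).mp hg
  by_cases hf2 : Integrable (fun x => f x ^ 2) μ
  · have hexpand :
        (fun x => (f x - g x) ^ 2) = fun x => f x ^ 2 - 2 * (f x * g x) + g x ^ 2 := by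
      funext x; ring
    have hcross : Integrable (fun x => f x ^ 2 - 2 * (f x * g x)) μ := hf2.sub (hfg.const_mul 2)
    have hdiff : Integrable (fun x => (f x - g x) ^ 2) μ := hexpand ▸ hcross.add hg2
    have hdiff_val : ∫ x, (f x - g x) ^ 2 ∂μ =
        ∫ x, f x ^ 2 ∂μ - 2 * ∫ x, f x * g x ∂μ + ∫ x, g x ^ 2 ∂μ := by
      rw [hexpand, integral_add hcross hg2, integral_sub hf2 (hfg.const_mul 2),
        integral_const_mul]
    have hsq_nonneg : ∀ h : α → ℝ, 0 ≤ᵐ[μ] fun x => h x ^ 2 := fun h =>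
      ae_of_all _ fun x => sq_nonneg (h x)
    rw [← ofReal_integral_eq_lintegral_ofReal hdiff (hsq_nonneg _),
      ← ofReal_integral_eq_lintegral_ofReal hf2 (hsq_nonneg _),
      ← ENNReal.ofReal_add (integral_nonneg fun x => sq_nonneg _)
        (integral_nonneg fun x => sq_nonneg _)]
    exact ENNReal.ofReal_le_ofReal (by linarith)
  · have htop : ∫⁻ x, ENNReal.ofReal (f x ^ 2) ∂μ = ∞ := by
      by_contra hne
      exact hf2 ((lintegral_ofReal_ne_top_iff_integrable (hf.pow 2)
        (ae_of_all _ fun x => sq_nonneg (f x))).mp hne)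
    rw [htop]
    exact le_top

theorem lintegral_sq_eq_ofReal_integral_sq_iff (hf : AEStronglyMeasurable f μ)
    (hg : MemLp g 2 μ) (hfg : Integrable (fun x => f x * g x) μ)
    (hle : ∫ x, g x ^ 2 ∂μ ≤ ∫ x, f x * g x ∂μ) :
    ∫⁻ x, ENNReal.ofReal (f x ^ 2) ∂μ = ENNReal.ofReal (∫ x, g x ^ 2 ∂μ) ↔ f =ᵐ[μ] g := by
  constructor
  · intro heq
    have hbound := ofReal_integral_sq_add_lintegral_sq_sub_le hf hg hfg hle
    rw [heq] at hbound
    have hzero : ∫⁻ x, ENNReal.ofReal ((f x - g x) ^ 2) ∂μ = 0 := nonpos_iff_eq_zero.mp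
      (ENNReal.le_of_add_le_add_left ofReal_ne_top (by simpa using hbound))
    have hmeas : AEMeasurable (fun x => ENNReal.ofReal ((f x - g x) ^ 2)) μ :=
      ((hf.sub hg.1).pow 2).aemeasurable.ennreal_ofReal
    rw [lintegral_eq_zero_iff' hmeas] at hzero
    filter_upwards [hzero] with x hx
    have hsq : (f x - g x) ^ 2 = 0 := le_antisymm (ENNReal.ofReal_eq_zero.mp hx) (sq_nonneg _)
    exact sub_eq_zero.mp (pow_eq_zero_iff two_ne_zero |>.mp hsq)
  · intro hfg_ae
    rw [lintegral_congr_ae (hfg_ae.mono fun x hx => by rw [hx]),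
      ofReal_integral_eq_lintegral_ofReal ((memLp_two_iff_integrable_sq hg.1).mp hg)
        (ae_of_all _ fun x => sq_nonneg (g x))]

end Projection

section ShiftedEpanechnikov

noncomputable def shiftedEpanechnikov (x : ℝ) : ℝ :=
  if x ∈ Set.Icc (0:ℝ) 1 then 6 * x * (1 - x) else 0

theorem shiftedEpanechnikov_eq_indicator :
    shiftedEpanechnikov = (Set.Icc (0:ℝ) 1).indicator fun x => 6 * x * (1 - x) := by
  funext x
  simp [shiftedEpanechnikov, Set.indicator_apply]

theorem measurable_shiftedEpanechnikov : Measurable shiftedEpanechnikov := by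
  rw [shiftedEpanechnikov_eq_indicator]
  exact (by fun_prop : Measurable fun x : ℝ => 6 * x * (1 - x)).indicator measurableSet_Icc

theorem abs_shiftedEpanechnikov_le (x : ℝ) : |shiftedEpanechnikov x| ≤ 3 / 2 := by
  unfold shiftedEpanechnikov
  split_ifs with hx
  · rw [abs_le]
    constructor <;> nlinarith [hx.1, hx.2, sq_nonneg (x - 1 / 2)]
  · norm_num

theorem parabola_le_shiftedEpanechnikov (x : ℝ) :
    3 / 2 - 6 * (x - 1 / 2) ^ 2 ≤ shiftedEpanechnikov x := by
  unfold shiftedEpanechnikov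
  split_ifs with hx
  · exact le_of_eq (by ring)
  · rw [Set.mem_Icc, not_and_or, not_le, not_le] at hx
    rcases hx with hx | hx <;> nlinarith

theorem intervalIntegral_epanechnikov_sq :
    ∫ x in (0:ℝ)..1, (6 * x * (1 - x)) ^ 2 = 6 / 5 := by
  have hderiv : ∀ x : ℝ, HasDerivAt (fun x => 12 * x ^ 3 - 18 * x ^ 4 + 36 / 5 * x ^ 5)
      ((6 * x * (1 - x)) ^ 2) x := fun x => by
    refine ((((hasDerivAt_pow 3 x).const_mul 12).fun_sub
      ((hasDerivAt_pow 4 x).const_mul 18)).fun_add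
      ((hasDerivAt_pow 5 x).const_mul (36 / 5))).congr_deriv ?_
    norm_num
    ring
  rw [intervalIntegral.integral_eq_sub_of_hasDerivAt (fun x _ => hderiv x)
    (by apply Continuous.intervalIntegrable; fun_prop)]
  norm_num

theorem intervalIntegral_shiftedEpanechnikov_sq :
    ∫ x in (0:ℝ)..1, shiftedEpanechnikov x ^ 2 = 6 / 5 := by
  rw [← intervalIntegral_epanechnikov_sq]
  refine intervalIntegral.integral_congr fun x hx => ?_
  rw [Set.uIcc_of_le zero_le_one] at hx
  simp only [shiftedEpanechnikov, if_pos hx]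

theorem sq_shiftedEpanechnikov_eq_indicator : (fun x => shiftedEpanechnikov x ^ 2) =
    (Set.Icc (0:ℝ) 1).indicator fun x => (6 * x * (1 - x)) ^ 2 := by
  funext x
  by_cases hx : x ∈ Set.Icc (0:ℝ) 1 <;> simp [shiftedEpanechnikov, hx]

theorem integral_shiftedEpanechnikov_sq : ∫ x, shiftedEpanechnikov x ^ 2 = 6 / 5 := by
  rw [sq_shiftedEpanechnikov_eq_indicator, integral_indicator measurableSet_Icc,
    integral_Icc_eq_integral_Ioc, ← intervalIntegral.integral_of_le zero_le_one,
    intervalIntegral_epanechnikov_sq]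

theorem memLp_two_shiftedEpanechnikov : MemLp shiftedEpanechnikov 2 := by
  refine (memLp_two_iff_integrable_sq measurable_shiftedEpanechnikov.aestronglyMeasurable).mpr ?_
  rw [sq_shiftedEpanechnikov_eq_indicator, integrable_indicator_iff measurableSet_Icc]
  exact Continuous.integrableOn_Icc (by fun_prop)

theorem integrable_mul_shiftedEpanechnikov {K : ℝ → ℝ} (hK : Integrable K) :
    Integrable fun x => K x * shiftedEpanechnikov x :=
  hK.mul_bdd measurable_shiftedEpanechnikov.aestronglyMeasurable
    (ae_of_all _ fun x => (Real.norm_eq_abs _).trans_le (abs_shiftedEpanechnikov_le x))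

theorem integral_mul_shiftedEpanechnikov_ge {K : ℝ → ℝ} (hnn : ∀ x, 0 ≤ K x)
    (hKint : Integrable K) (hmomInt : Integrable fun x => (x - 1 / 2) ^ 2 * K x) :
    3 / 2 * (∫ x, K x) - 6 * ∫ x, (x - 1 / 2) ^ 2 * K x ≤
      ∫ x, K x * shiftedEpanechnikov x := by
  have hparabola : Integrable fun x => 3 / 2 * K x - 6 * ((x - 1 / 2) ^ 2 * K x) :=
    (hKint.const_mul _).sub (hmomInt.const_mul 6)
  calc 3 / 2 * (∫ x, K x) - 6 * ∫ x, (x - 1 / 2) ^ 2 * K x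
      = ∫ x, 3 / 2 * K x - 6 * ((x - 1 / 2) ^ 2 * K x) := by
        rw [integral_sub (hKint.const_mul _) (hmomInt.const_mul 6), integral_const_mul,
          integral_const_mul]
    _ ≤ ∫ x, K x * shiftedEpanechnikov x :=
        integral_mono hparabola (integrable_mul_shiftedEpanechnikov hKint) fun x => by
          nlinarith [mul_le_mul_of_nonneg_left (parabola_le_shiftedEpanechnikov x) (hnn x)]

end ShiftedEpanechnikov

theorem stmt_3_general (K : ℝ → ℝ) (hnn : ∀ x, 0 ≤ K x)
    (hKint : Integrable K) (hK1 : (∫ x : ℝ, K x) = 1)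
    (hmomInt : Integrable (fun x => (x - 1/2)^2 * K x))
    (hmom : (∫ x : ℝ, (x - 1/2)^2 * K x) = 1/20) :
    let Kopt : ℝ → ℝ := fun x => if x ∈ Set.Icc (0:ℝ) 1 then 6 * x * (1 - x) else 0
    (∫ x in (0:ℝ)..1, (Kopt x)^2) = 6/5 ∧
    (6/5 : ℝ≥0∞) ≤ ∫⁻ x : ℝ, ENNReal.ofReal ((K x)^2) ∧
    ((∫⁻ x : ℝ, ENNReal.ofReal ((K x)^2)) = (6/5 : ℝ≥0∞) ↔
      K =ᵐ[volume] Kopt) := by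
  intro Kopt
  have hKopt : Kopt = shiftedEpanechnikov := rfl
  have hcross : ∫ x, shiftedEpanechnikov x ^ 2 ≤ ∫ x, K x * shiftedEpanechnikov x := by
    have hlower := integral_mul_shiftedEpanechnikov_ge hnn hKint hmomInt
    rw [hK1, hmom] at hlower
    rw [integral_shiftedEpanechnikov_sq]
    linarith
  have h65 : (6 / 5 : ℝ≥0∞) = ENNReal.ofReal (∫ x, shiftedEpanechnikov x ^ 2) := by
    rw [integral_shiftedEpanechnikov_sq, ENNReal.ofReal_div_of_pos (by norm_num)]
    norm_num
  rw [hKopt, h65]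
  exact ⟨intervalIntegral_shiftedEpanechnikov_sq,
    le_self_add.trans (ofReal_integral_sq_add_lintegral_sq_sub_le hKint.1
      memLp_two_shiftedEpanechnikov (integrable_mul_shiftedEpanechnikov hKint) hcross),
    lintegral_sq_eq_ofReal_integral_sq_iff hKint.1 memLp_two_shiftedEpanechnikov
      (integrable_mul_shiftedEpanechnikov hKint) hcross⟩

theorem stmt_3 (K : ℝ → ℝ) (hmeas : Measurable K) (hnn : ∀ x, 0 ≤ K x)
    (hKint : Integrable K) (hK1 : (∫ x : ℝ, K x) = 1)
    (hsym : ∀ x, K x = K (1 - x))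
    (hmomInt : Integrable (fun x => (x - 1/2)^2 * K x))
    (hmom : (∫ x : ℝ, (x - 1/2)^2 * K x) = 1/20) :
    let Kopt : ℝ → ℝ := fun x => if x ∈ Set.Icc (0:ℝ) 1 then 6 * x * (1 - x) else 0
    (∫ x in (0:ℝ)..1, (Kopt x)^2) = 6/5 ∧
    (6/5 : ℝ≥0∞) ≤ ∫⁻ x : ℝ, ENNReal.ofReal ((K x)^2) ∧
    ((∫⁻ x : ℝ, ENNReal.ofReal ((K x)^2)) = (6/5 : ℝ≥0∞) ↔
      K =ᵐ[volume] Kopt) :=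
  stmt_3_general K hnn hKint hK1 hmomInt hmom
end
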